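/- arXiv:2112.13822 — 2 statements merged into one kernel-verified Lean document; each statement's English description precedes it below -/
import Mathlib

section
/- Let c_1, ..., c_β be simple directed cycles in a directed multigraph with edge lengths linearly independent over ℚ, and suppose each c_i contains a designated 'backward' edge e_i that lies in no other cycle c_j (j ≠ i). Then the cycle times t(c_1), ..., t(c_β) are linearly independent over ℚ; in particular, the map (a_1,...,a_β) ↦ Σ a_i t(c_i) from (ℤ≥0)^β to ℝ is injective. -/
/-!
Expand `∑ i, q i • t(c i)` in the edge lengths: the private edge `e j` of `c j` occurs with
coefficient exactly `q j`, so `ℚ`-independence of the edge lengths forces every `q j` to vanish.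
Injectivity on `ℕ`-coefficients is independence over `ℕ ⊆ ℚ`.
-/

/-- A directed multigraph: edges with a source and a target vertex. -/
structure DiMultigraph (V E : Type*) where
  src : E → V
  tgt : E → V

/-- A nonempty injective cyclically-closed family of edges is a simple-enough directed
cycle (each edge used at most once); we record its edge set as a `Finset`. -/
def DiMultigraph.IsCycleEdgeSet {V E : Type*} [DecidableEq E]
    (G : DiMultigraph V E) (s : Finset E) : Prop :=
  ∃ (m : ℕ) (_ : 0 < m) (es : Fin m → E), Function.Injective es ∧
    (∀ i, G.tgt (es i) = G.src (es (finRotate _ i))) ∧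
    s = Finset.image es Finset.univ

section PrivateElements

variable {ι E R : Type*} [Semiring R] {c : ι → Finset E} {e : ι → E}

theorem Finsupp.linearCombination_finset_sum_single_one {M : Type*} [AddCommMonoid M]
    [Module R M] (t : E → M) (s : Finset E) :
    Finsupp.linearCombination R t (∑ x ∈ s, Finsupp.single x (1 : R)) = ∑ x ∈ s, t x := by
  simp

theorem linearIndependent_finset_indicator_of_private
    (he : ∀ i, e i ∈ c i) (hback : ∀ i j, i ≠ j → e i ∉ c j) :
    LinearIndependent R (fun i => ∑ x ∈ c i, Finsupp.single x (1 : R)) := by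
  classical
  have hcoeff : ∀ (l : ι →₀ R) j, Finsupp.linearCombination R
      (fun i => ∑ x ∈ c i, Finsupp.single x (1 : R)) l (e j) = l j := by
    intro l j
    have hpriv : ∀ i, (∑ x ∈ c i, Finsupp.single x (1 : R)) (e j) = if i = j then 1 else 0 := by
      intro i
      have hmem : e j ∈ c i ↔ i = j :=
        ⟨fun h => by_contra fun hij => hback j i (Ne.symm hij) h, fun h => h ▸ he i⟩
      simp only [Finsupp.finsetSum_apply, Finsupp.single_apply, Finset.sum_ite_eq', hmem]
    rw [Finsupp.linearCombination_apply, Finsupp.sum_apply]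
    simp only [Finsupp.smul_apply, hpriv, smul_eq_mul, mul_ite, mul_one, mul_zero,
      Finsupp.sum_ite_self_eq']
  intro l l' h
  ext j
  rw [← hcoeff l j, h, hcoeff l' j]

theorem LinearIndependent.finset_sum_of_private {M : Type*} [AddCommMonoid M] [Module R M]
    {t : E → M} (hli : LinearIndependent R t)
    (he : ∀ i, e i ∈ c i) (hback : ∀ i j, i ≠ j → e i ∉ c j) :
    LinearIndependent R (fun i => ∑ x ∈ c i, t x) := by
  have := (linearIndependent_finset_indicator_of_private (R := R) he hback).map_injOn
    (Finsupp.linearCombination R t) hli.injOn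
  simpa only [Function.comp_def, Finsupp.linearCombination_finset_sum_single_one] using this

end PrivateElements

theorem LinearIndependent.injective_natCast_sum_mul {ι K : Type*} [Fintype ι] [Field K]
    [CharZero K] {w : ι → K} (hw : LinearIndependent ℚ w) :
    Function.Injective (fun a : ι → ℕ => ∑ i, (a i : K) * w i) := by
  intro a b hab
  funext i
  refine Fintype.linearIndependent_iffₛ.mp (hw.restrict_scalars' ℕ) a b ?_ i
  simpa only [nsmul_eq_mul] using hab

theorem cycle_times_linearIndependent_general {E : Type*}
    (t : E → ℝ)
    (hli : LinearIndependent ℚ t)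
    (β : ℕ) (c : Fin β → Finset E)
    (e : Fin β → E) (he : ∀ i, e i ∈ c i)
    (hback : ∀ i j, i ≠ j → e i ∉ c j) :
    LinearIndependent ℚ (fun i => ∑ x ∈ c i, t x) ∧
    Function.Injective (fun a : Fin β → ℕ => ∑ i, (a i : ℝ) * ∑ x ∈ c i, t x) :=
  have hcycles := hli.finset_sum_of_private he hback
  ⟨hcycles, hcycles.injective_natCast_sum_mul⟩

/-- If each simple cycle `c_i` contains a designated backward edge `e_i` lying in no
other cycle `c_j`, and edge lengths are positive and linearly independent over `ℚ`,
then the cycle times `t(c_1), …, t(c_β)` are linearly independent over `ℚ`; in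
particular `(a_1,…,a_β) ↦ Σ a_i t(c_i)` is injective on `(ℤ≥0)^β`. -/
theorem cycle_times_linearIndependent {V E : Type*} [DecidableEq E]
    (G : DiMultigraph V E) (t : E → ℝ) (hpos : ∀ e, 0 < t e)
    (hli : LinearIndependent ℚ t)
    (β : ℕ) (c : Fin β → Finset E) (hc : ∀ i, G.IsCycleEdgeSet (c i))
    (e : Fin β → E) (he : ∀ i, e i ∈ c i)
    (hback : ∀ i j, i ≠ j → e i ∉ c j) :
    LinearIndependent ℚ (fun i => ∑ x ∈ c i, t x) ∧
    Function.Injective (fun a : Fin β → ℕ => ∑ i, (a i : ℝ) * ∑ x ∈ c i, t x) :=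
  cycle_times_linearIndependent_general t hli β c e he hback
end

section
/- Let G be a Hamiltonian directed multigraph with first Betti number β = |E| - |V| + 1, and suppose G is an oriented cycle together with extra (outer) edges, where the vertex set is partitioned into a set A of consecutively numbered vertices not containing the start vertex and its complement B containing the start vertex, and every outer edge goes from B to A. Then every simple directed cycle of G contains at most one outer edge. -/
/-!
A closed walk crosses the cut `(A, B)` as often from `B` to `A` as from `A` to `B`. Every outer
edge crosses from `B` to `A`, while the only edges from `A` to `B` are inner edges leaving the
last vertex of the arc `A`; a simple cycle passes that vertex at most once, so it crosses from
`A` to `B` at most once, hence uses at most one outer edge.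
-/

open Finset

theorem Equiv.Perm.card_filter_apply_notMem_eq {ι : Type*} [Fintype ι] (σ : Equiv.Perm ι)
    (p : ι → Prop) [DecidablePred p] :
    #{i | p i ∧ ¬ p (σ i)} = #{i | ¬ p i ∧ p (σ i)} := by
  classical
  have hcard : #{i | p i} = #{i | p (σ i)} := card_equiv σ.symm (by simp)
  simpa [sdiff_eq_filter, filter_filter, and_comm] using card_sdiff_comm hcard

theorem DiMultigraph.card_leaving_eq_card_entering {V E : Type*} [DecidableEq V]
    (G : DiMultigraph V E) {m : ℕ} {es : Fin m → E}
    (hclose : ∀ i, G.tgt (es i) = G.src (es (finRotate _ i))) (A : Finset V) :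
    #{i | G.src (es i) ∈ A ∧ G.tgt (es i) ∉ A} = #{i | G.src (es i) ∉ A ∧ G.tgt (es i) ∈ A} := by
  simp only [hclose]
  exact (finRotate m).card_filter_apply_notMem_eq fun i => G.src (es i) ∈ A

section Arc

variable {N : ℕ} [NeZero N]

def arc (s : Fin N) (l : ℕ) : Finset (Fin N) := (range l).image fun j => s + Fin.ofNat N j

theorem eq_of_mem_arc_of_add_one_notMem {s x : Fin N} {l : ℕ} (hx : x ∈ arc s l)
    (hx1 : x + 1 ∉ arc s l) : x = s + Fin.ofNat N (l - 1) := by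
  obtain ⟨k, hk, rfl⟩ := mem_image.1 hx
  rw [mem_range] at hk
  obtain rfl : k + 1 = l := by
    by_contra hne
    refine hx1 (mem_image.2 ⟨k + 1, mem_range.2 (by omega), ?_⟩)
    rw [add_assoc]
    congr 1
    ext
    simp [Fin.val_add, Nat.add_mod]
  simp

end Arc

theorem simple_cycle_at_most_one_outer_edge_general {n : ℕ} {E : Type*}
    (G : DiMultigraph (Fin (n + 1)) E)
    (inner : Fin (n + 1) → E)
    (hinner : ∀ i, G.src (inner i) = i ∧ G.tgt (inner i) = i + 1)
    (A : Finset (Fin (n + 1)))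
    (hConsec : ∃ (s : Fin (n + 1)) (l : ℕ),
      A = (Finset.range l).image (fun j : ℕ => s + Fin.ofNat (n + 1) j))
    (houter : ∀ e : E, e ∉ Set.range inner → G.src e ∉ A ∧ G.tgt e ∈ A) :
    ∀ (m : ℕ) (es : Fin m → E),
      0 < m →
      (∀ i, G.tgt (es i) = G.src (es (finRotate _ i))) →
      Function.Injective (fun i => G.src (es i)) →
      ∀ i j, es i ∉ Set.range inner → es j ∉ Set.range inner → i = j := by
  intro m es _ hclose hinj i j hi hj
  obtain ⟨s, l, hA⟩ : ∃ s l, A = arc s l := hConsec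
  have src_of_leaving : ∀ k, G.src (es k) ∈ A → G.tgt (es k) ∉ A →
      G.src (es k) = s + Fin.ofNat (n + 1) (l - 1) := by
    intro k hsrc htgt
    obtain ⟨v, hv⟩ : es k ∈ Set.range inner :=
      not_not.1 fun hk => (houter _ hk).1 hsrc
    rw [← hv, (hinner v).1] at hsrc ⊢
    rw [← hv, (hinner v).2] at htgt
    exact eq_of_mem_arc_of_add_one_notMem (hA ▸ hsrc) (hA ▸ htgt)
  have hleaving : #{k | G.src (es k) ∈ A ∧ G.tgt (es k) ∉ A} ≤ 1 := by
    refine card_le_one.2 fun a ha b hb => hinj ?_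
    simp only [mem_filter, mem_univ, true_and] at ha hb
    exact (src_of_leaving a ha.1 ha.2).trans (src_of_leaving b hb.1 hb.2).symm
  rw [G.card_leaving_eq_card_entering hclose] at hleaving
  exact card_le_one.1 hleaving i (by simpa using houter _ hi) j (by simpa using houter _ hj)

/-- For a Hamiltonian digraph on vertices `0,1,…,n` (inner edges forming the directed
cycle `i → i+1 (mod n+1)`), suppose the vertex set is split into a cyclically
consecutive set `A` not containing the start vertex `0` and its complement `B`, and
every outer edge goes from `B` to `A`. Then every simple directed cycle contains at
most one outer edge. -/
theorem simple_cycle_at_most_one_outer_edge {n : ℕ} {E : Type*}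
    (G : DiMultigraph (Fin (n + 1)) E)
    (inner : Fin (n + 1) → E)
    (hinner : ∀ i, G.src (inner i) = i ∧ G.tgt (inner i) = i + 1)
    (A : Finset (Fin (n + 1)))
    (hConsec : ∃ (s : Fin (n + 1)) (l : ℕ),
      A = (Finset.range l).image (fun j : ℕ => s + Fin.ofNat (n + 1) j))
    (hstart : (0 : Fin (n + 1)) ∉ A)
    (houter : ∀ e : E, e ∉ Set.range inner → G.src e ∉ A ∧ G.tgt e ∈ A) :
    ∀ (m : ℕ) (es : Fin m → E),
      0 < m →
      (∀ i, G.tgt (es i) = G.src (es (finRotate _ i))) →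
      Function.Injective (fun i => G.src (es i)) →
      ∀ i j, es i ∉ Set.range inner → es j ∉ Set.range inner → i = j :=
  simple_cycle_at_most_one_outer_edge_general G inner hinner A hConsec houter
end
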